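/- Let (U_k)_{k≥0} be a sequence of nonnegative real numbers such that U_0 ≤ C for some constant C > 0, and such that there exist constants A ≥ 1, 1 < β₁ < β₂, C' > 0 and K > 0 with U_k ≤ C' (A^k / K)(U_{k-1}^{β₁} + U_{k-1}^{β₂}) for all k ≥ 1. Then there exists K₀ > 0 (depending on C, C', A, β₁, β₂) such that for every K > K₀ the sequence U_k converges to 0 as k → ∞. -/

import Mathlib

/-!
Pick `δ ∈ (0, 1)` with `A δ ^ (β₁ - 1) ≤ 1`. Once `K` is large, the geometric sequence `C δ ^ k` is a
supersolution of the recursion: on `[0, C]` the term `x ^ β₂` is at most `C ^ (β₂ - β₁) x ^ β₁`,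
and the extra factor `(δ ^ k) ^ (β₁ - 1)` absorbs the growth of `A ^ k`. Since
`x ↦ x ^ β₁ + x ^ β₂` is monotone, `U` stays below this supersolution and therefore tends to `0`.
-/

open Filter Topology

lemma rpow_le_mul_rpow_of_le {x R β₁ β₂ : ℝ} (hx : 0 ≤ x) (hxR : x ≤ R) (hβ₁ : 0 ≤ β₁)
    (hβ : β₁ ≤ β₂) : x ^ β₂ ≤ R ^ (β₂ - β₁) * x ^ β₁ := by
  calc x ^ β₂ = x ^ (β₂ - β₁) * x ^ β₁ := by
        rw [← Real.rpow_add_of_nonneg hx (sub_nonneg.2 hβ) hβ₁, sub_add_cancel]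
    _ ≤ R ^ (β₂ - β₁) * x ^ β₁ := by gcongr

lemma monotoneOn_rpow_add_rpow {β₁ β₂ : ℝ} (hβ₁ : 0 ≤ β₁) (hβ₂ : 0 ≤ β₂) :
    MonotoneOn (fun x : ℝ => x ^ β₁ + x ^ β₂) (Set.Ici 0) := fun _ hx _ _ hxy =>
  add_le_add (Real.rpow_le_rpow hx hxy hβ₁) (Real.rpow_le_rpow hx hxy hβ₂)

theorem le_of_rec_le_of_supersolution {f : ℝ → ℝ} (hf : MonotoneOn f (Set.Ici 0))
    {c U M : ℕ → ℝ} (hc : ∀ k, 0 ≤ c k) (hU : ∀ k, 0 ≤ U k) (h0 : U 0 ≤ M 0)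
    (hUrec : ∀ k, U (k + 1) ≤ c k * f (U k)) (hM : ∀ k, c k * f (M k) ≤ M (k + 1)) :
    ∀ k, U k ≤ M k
  | 0 => h0
  | k + 1 => by
    have ih := le_of_rec_le_of_supersolution hf hc hU h0 hUrec hM k
    calc U (k + 1) ≤ c k * f (U k) := hUrec k
      _ ≤ c k * f (M k) := by
          gcongr
          exacts [hc k, hf (hU k) ((hU k).trans ih) ih]
      _ ≤ M (k + 1) := hM k

lemma exists_pos_lt_one_mul_rpow_le_one (A : ℝ) {β : ℝ} (hβ : 0 < β) :
    ∃ δ, 0 < δ ∧ δ < 1 ∧ A * δ ^ β ≤ 1 := by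
  have hlim : Tendsto (fun δ : ℝ => A * δ ^ β) (𝓝[>] 0) (𝓝 0) := by
    have := ((Real.continuousAt_rpow_const 0 β (Or.inr hβ.le)).tendsto.const_mul A).mono_left
      (nhdsWithin_le_nhds (s := Set.Ioi 0))
    rwa [Real.zero_rpow hβ.ne', mul_zero] at this
  obtain ⟨δ, hδ, ⟨hδ0, hδ1⟩⟩ :=
    ((hlim.eventually (eventually_le_nhds one_pos)).and (Ioo_mem_nhdsGT one_pos)).exists
  exact ⟨δ, hδ0, hδ1, hδ⟩

lemma pow_mul_pow_rpow_le {A δ β : ℝ} (hA : 0 ≤ A) (hδ : 0 < δ) (hAδ : A * δ ^ (β - 1) ≤ 1)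
    (k : ℕ) : A ^ k * (δ ^ k) ^ β ≤ δ ^ k := by
  have hsplit : δ ^ β = δ * δ ^ (β - 1) := by
    rw [Real.rpow_sub_one hδ.ne', mul_div_cancel₀ _ hδ.ne']
  calc A ^ k * (δ ^ k) ^ β = δ ^ k * (A * δ ^ (β - 1)) ^ k := by
        rw [← Real.rpow_pow_comm hδ.le, hsplit]
        ring
    _ ≤ δ ^ k * 1 := by
        gcongr
        exact pow_le_one₀ (by positivity) hAδ
    _ = δ ^ k := mul_one _

lemma geometric_supersolution {A C C' K δ β₁ β₂ : ℝ} (hA : 0 ≤ A) (hC : 0 < C) (hC' : 0 ≤ C')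
    (hK : 0 < K) (hδ : 0 < δ) (hδ1 : δ ≤ 1) (hβ₁ : 0 ≤ β₁) (hβ : β₁ ≤ β₂)
    (hAδ : A * δ ^ (β₁ - 1) ≤ 1) (hKδ : C' * (1 + C ^ (β₂ - β₁)) * C ^ β₁ * A ≤ K * (C * δ))
    (k : ℕ) :
    C' * (A ^ (k + 1) / K) * ((C * δ ^ k) ^ β₁ + (C * δ ^ k) ^ β₂) ≤ C * δ ^ (k + 1) := by
  have hm : 0 ≤ C * δ ^ k := by positivity
  have hmC : C * δ ^ k ≤ C := mul_le_of_le_one_right hC.le (pow_le_one₀ hδ.le hδ1)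
  have hpow : A ^ k * (C * δ ^ k) ^ β₁ ≤ C ^ β₁ * δ ^ k := by
    rw [Real.mul_rpow hC.le (by positivity), mul_left_comm]
    gcongr
    exact pow_mul_pow_rpow_le hA hδ hAδ k
  calc C' * (A ^ (k + 1) / K) * ((C * δ ^ k) ^ β₁ + (C * δ ^ k) ^ β₂)
      ≤ C' * (A ^ (k + 1) / K) * ((1 + C ^ (β₂ - β₁)) * (C * δ ^ k) ^ β₁) := by
        gcongr
        linarith [rpow_le_mul_rpow_of_le hm hmC hβ₁ hβ]
    _ = C' * (1 + C ^ (β₂ - β₁)) * A / K * (A ^ k * (C * δ ^ k) ^ β₁) := by ring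
    _ ≤ C' * (1 + C ^ (β₂ - β₁)) * A / K * (C ^ β₁ * δ ^ k) := by gcongr
    _ = C' * (1 + C ^ (β₂ - β₁)) * C ^ β₁ * A / K * δ ^ k := by ring
    _ ≤ K * (C * δ) / K * δ ^ k := by gcongr
    _ = C * δ ^ (k + 1) := by
        field_simp
        ring

/-- De Giorgi iteration lemma: if `U 0 ≤ C` and
`U k ≤ C' * (A^k / K) * (U (k-1) ^ β₁ + U (k-1) ^ β₂)` for all `k ≥ 1`,
then for `K` large enough `U k → 0`. -/
theorem deGiorgi_iteration
    (C C' A β₁ β₂ : ℝ) (hC : 0 < C) (hC' : 0 < C') (hA : 1 ≤ A)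
    (hβ₁ : 1 < β₁) (hβ : β₁ < β₂) :
    ∃ K₀ > 0, ∀ K > K₀, ∀ U : ℕ → ℝ,
      (∀ k, 0 ≤ U k) → U 0 ≤ C →
      (∀ k : ℕ, 1 ≤ k → U k ≤ C' * (A ^ k / K) * (U (k - 1) ^ β₁ + U (k - 1) ^ β₂)) →
      Tendsto U atTop (nhds 0) := by
  obtain ⟨δ, hδ0, hδ1, hAδ⟩ := exists_pos_lt_one_mul_rpow_le_one A (sub_pos.2 hβ₁)
  have hA0 : 0 ≤ A := zero_le_one.trans hA
  refine ⟨C' * (1 + C ^ (β₂ - β₁)) * C ^ β₁ * A / (C * δ), by positivity,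
    fun K hK U hU hU0 hrec => ?_⟩
  have hKpos : 0 < K := lt_of_le_of_lt (by positivity) hK
  have hbound : ∀ k, U k ≤ C * δ ^ k :=
    le_of_rec_le_of_supersolution (monotoneOn_rpow_add_rpow (by linarith) (by linarith))
      (c := fun k => C' * (A ^ (k + 1) / K)) (fun k => by positivity) hU (by simpa using hU0)
      (fun k => hrec (k + 1) k.succ_pos)
      (geometric_supersolution hA0 hC hC'.le hKpos hδ0 hδ1.le (by linarith) hβ.le hAδ
        ((div_lt_iff₀ (by positivity)).1 hK).le)
  have hgeom : Tendsto (fun k => C * δ ^ k) atTop (𝓝 0) := by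
    simpa using (tendsto_pow_atTop_nhds_zero_of_lt_one hδ0.le hδ1).const_mul C
  exact squeeze_zero hU hbound hgeom
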